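/- Let g be a Lie triple system over a field F with char F ≠ 2, 3 and N : g → g a Nijenhuis operator. Then for every integer k > 0 the power N^k is also a Nijenhuis operator, i.e. [N^k x, N^k y, N^k z] = 0 and (N^k)²[x,y,z] = N^k[N^k x,y,z] + N^k[x,N^k y,z] + N^k[x,y,N^k z] − [N^k x,N^k y,z] − [N^k x,y,N^k z] − [x,N^k y,N^k z] for all x,y,z ∈ g. -/

import Mathlib

/-- `N` is a Nijenhuis operator for the Lie triple system bracket `t`. -/
def IsNijenhuis {F : Type*} [Field F] {g : Type*} [AddCommGroup g] [Module F g]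
    (t : g →ₗ[F] g →ₗ[F] g →ₗ[F] g) (N : Module.End F g) : Prop :=
  (∀ x y z : g, t (N x) (N y) (N z) = 0) ∧
  (∀ x y z : g,
    N (N (t x y z)) =
      N (t (N x) y z) + N (t x (N y) z) + N (t x y (N z)) -
        t (N x) (N y) z - t (N x) y (N z) - t x (N y) (N z))

/-!
Regard the ternary operation `t` as a vector on which four commuting operators act: `n`, composing
with `N` on the left, and `a`, `b`, `c`, precomposing with `N` in one argument. The Nijenhuis
conditions read `abc • t = 0` and `(n² - e₁ n + e₂) • t = 0`, where `e₁`, `e₂` are the elementary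
symmetric functions of `a, b, c`. Modulo the annihilator of `t`, the element `m = e₁ - n` satisfies
`n + m = e₁` and `nm = e₂`, and `abc = 0`; so the triples `(n, m, 0)` and `(a, b, c)` have the same
elementary symmetric functions, hence the same power sums, and moreover `e₂(aᵏ, bᵏ, cᵏ) = (nm)ᵏ`.
Therefore `n²ᵏ - (aᵏ + bᵏ + cᵏ) nᵏ + e₂(aᵏ, bᵏ, cᵏ) = n²ᵏ - (nᵏ + mᵏ) nᵏ + nᵏmᵏ = 0`, which is the
Nijenhuis condition for `Nᵏ`.
-/

section CommRing

variable {R : Type*} [CommRing R]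

theorem add_add_pow_succ_of_mul_eq_zero {x y z : R} (hxy : x * y = 0) (hyz : y * z = 0)
    (hzx : z * x = 0) (k : ℕ) :
    (x + y + z) ^ (k + 1) = x ^ (k + 1) + y ^ (k + 1) + z ^ (k + 1) := by
  induction k with
  | zero => simp
  | succ k ih =>
    rw [pow_succ, ih]
    linear_combination (x ^ k + y ^ k) * hxy + (y ^ k + z ^ k) * hyz + (z ^ k + x ^ k) * hzx

theorem pow_add_pow_add_pow_succ_eq_of_esymm {a b c n m : R} (h₁ : n + m = a + b + c)
    (h₂ : n * m = a * b + b * c + c * a) (h₃ : a * b * c = 0) (k : ℕ) :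
    a ^ (k + 1) + b ^ (k + 1) + c ^ (k + 1) = n ^ (k + 1) + m ^ (k + 1) := by
  -- both sides satisfy the recurrence `sⱼ₊₂ = e₁ sⱼ₊₁ - e₂ sⱼ` (using `abc = 0`)
  suffices ∀ k : ℕ, a ^ (k + 1) + b ^ (k + 1) + c ^ (k + 1) = n ^ (k + 1) + m ^ (k + 1) ∧
      a ^ (k + 2) + b ^ (k + 2) + c ^ (k + 2) = n ^ (k + 2) + m ^ (k + 2) from (this k).1
  intro k
  induction k with
  | zero =>
    exact ⟨by linear_combination -h₁,
      by linear_combination (-(n + m + a + b + c)) * h₁ + 2 * h₂⟩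
  | succ k ih =>
    refine ⟨ih.2, ?_⟩
    linear_combination (a + b + c) * ih.2 - (a * b + b * c + c * a) * ih.1 +
      (a ^ k + b ^ k + c ^ k) * h₃ - (n ^ (k + 2) + m ^ (k + 2)) * h₁ +
      (n ^ (k + 1) + m ^ (k + 1)) * h₂

theorem nijenhuis_relation_pow_succ {n a b c : R}
    (hn : n ^ 2 - (a + b + c) * n + (a * b + b * c + c * a) = 0) (habc : a * b * c = 0)
    (k : ℕ) :
    (n ^ (k + 1)) ^ 2 - (a ^ (k + 1) + b ^ (k + 1) + c ^ (k + 1)) * n ^ (k + 1) +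
      (a ^ (k + 1) * b ^ (k + 1) + b ^ (k + 1) * c ^ (k + 1) + c ^ (k + 1) * a ^ (k + 1)) = 0 := by
  obtain ⟨m, hm⟩ : ∃ m, n + m = a + b + c := ⟨a + b + c - n, by ring⟩
  have hnm : n * m = a * b + b * c + c * a := by linear_combination -hn + n * hm
  have hpow := pow_add_pow_add_pow_succ_eq_of_esymm hm hnm habc k
  have hesymm := add_add_pow_succ_of_mul_eq_zero (x := a * b) (y := b * c) (z := c * a)
    (by linear_combination b * habc) (by linear_combination c * habc)
    (by linear_combination a * habc) k
  rw [← hnm] at hesymm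
  linear_combination (-n ^ (k + 1)) * hpow - hesymm

end CommRing

def NijenhuisRelations {A M : Type*} [Ring A] [AddCommGroup M] [Module A M] (n a b c : A)
    (v : M) : Prop :=
  (a * b * c) • v = 0 ∧ (n ^ 2 - (a + b + c) * n + (a * b + b * c + c * a)) • v = 0

open scoped IsMulCommutative in
theorem NijenhuisRelations.pow {A M : Type*} [Ring A] [AddCommGroup M] [Module A M]
    {n a b c : A} {v : M}
    (hcomm : ∀ x ∈ ({n, a, b, c} : Set A), ∀ y ∈ ({n, a, b, c} : Set A), x * y = y * x)
    (h : NijenhuisRelations n a b c v) {k : ℕ} (hk : 0 < k) :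
    NijenhuisRelations (n ^ k) (a ^ k) (b ^ k) (c ^ k) v := by
  obtain ⟨k, rfl⟩ := Nat.exists_eq_add_one.2 hk
  -- the relations become equations in the quotient of a commutative ring by the annihilator of `v`
  have := Subring.isMulCommutative_closure hcomm
  let S := Subring.closure ({n, a, b, c} : Set A)
  let q := Ideal.Quotient.mk (Ideal.torsionOf S M v)
  have hq (x : S) : q x = 0 ↔ x • v = 0 :=
    Ideal.Quotient.eq_zero_iff_mem.trans (Ideal.mem_torsionOf_iff v x)
  let n' : S := ⟨n, Subring.subset_closure (by simp)⟩
  let a' : S := ⟨a, Subring.subset_closure (by simp)⟩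
  let b' : S := ⟨b, Subring.subset_closure (by simp)⟩
  let c' : S := ⟨c, Subring.subset_closure (by simp)⟩
  have habc : q a' * q b' * q c' = 0 := by
    simpa only [map_mul] using (hq (a' * b' * c')).2 h.1
  have hn : q n' ^ 2 - (q a' + q b' + q c') * q n' +
      (q a' * q b' + q b' * q c' + q c' * q a') = 0 := by
    simp only [← map_mul, ← map_add, ← map_pow, ← map_sub, hq]
    exact h.2
  constructor
  · have := congrArg (· ^ (k + 1)) habc
    simp only [mul_pow, zero_pow k.succ_ne_zero, ← map_mul, ← map_pow, hq] at this
    exact this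
  · have := nijenhuis_relation_pow_succ hn habc k
    simp only [← map_mul, ← map_add, ← map_pow, ← map_sub, hq] at this
    exact this

namespace TernaryOp

variable {R M : Type*} [Semiring R] [AddCommGroup M] [Module R M]

def postcomp (f : Module.End R M) : Module.End R (M → M → M → M) :=
  LinearMap.compLeft (LinearMap.compLeft (LinearMap.compLeft f M) M) M

def precomp₁ (f : Module.End R M) : Module.End R (M → M → M → M) :=
  LinearMap.funLeft R (M → M → M) f

def precomp₂ (f : Module.End R M) : Module.End R (M → M → M → M) :=
  LinearMap.compLeft (LinearMap.funLeft R (M → M) f) M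

def precomp₃ (f : Module.End R M) : Module.End R (M → M → M → M) :=
  LinearMap.compLeft (LinearMap.compLeft (LinearMap.funLeft R M f) M) M

variable (f : Module.End R M) (φ : M → M → M → M) (x y z : M)

@[simp] theorem postcomp_apply : postcomp f φ x y z = f (φ x y z) := rfl
@[simp] theorem precomp₁_apply : precomp₁ f φ x y z = φ (f x) y z := rfl
@[simp] theorem precomp₂_apply : precomp₂ f φ x y z = φ x (f y) z := rfl
@[simp] theorem precomp₃_apply : precomp₃ f φ x y z = φ x y (f z) := rfl

theorem postcomp_pow (k : ℕ) : postcomp f ^ k = postcomp (f ^ k) := by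
  induction k with
  | zero => rfl
  | succ k ih => rw [pow_succ, ih, pow_succ]; rfl

theorem precomp₁_pow (k : ℕ) : precomp₁ f ^ k = precomp₁ (f ^ k) := by
  induction k with
  | zero => rfl
  | succ k ih => rw [pow_succ', ih, pow_succ]; rfl

theorem precomp₂_pow (k : ℕ) : precomp₂ f ^ k = precomp₂ (f ^ k) := by
  induction k with
  | zero => rfl
  | succ k ih => rw [pow_succ', ih, pow_succ]; rfl

theorem precomp₃_pow (k : ℕ) : precomp₃ f ^ k = precomp₃ (f ^ k) := by
  induction k with
  | zero => rfl
  | succ k ih => rw [pow_succ', ih, pow_succ]; rfl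

theorem pairwise_commute :
    ∀ u ∈ ({postcomp f, precomp₁ f, precomp₂ f, precomp₃ f} : Set (Module.End R (M → M → M → M))),
    ∀ v ∈ ({postcomp f, precomp₁ f, precomp₂ f, precomp₃ f} : Set (Module.End R (M → M → M → M))),
      u * v = v * u := by
  simp only [Set.mem_insert_iff, Set.mem_singleton_iff]
  rintro u (rfl | rfl | rfl | rfl) v (rfl | rfl | rfl | rfl) <;> rfl

end TernaryOp

open TernaryOp

theorem isNijenhuis_iff_nijenhuisRelations {F : Type*} [Field F] {g : Type*} [AddCommGroup g]
    [Module F g] {t : g →ₗ[F] g →ₗ[F] g →ₗ[F] g} {N : Module.End F g} :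
    IsNijenhuis t N ↔ NijenhuisRelations (postcomp N) (precomp₁ N) (precomp₂ N) (precomp₃ N)
      (fun x y z => t x y z) := by
  simp only [IsNijenhuis, NijenhuisRelations, funext_iff, pow_two, Module.End.smul_def,
    LinearMap.add_apply, LinearMap.sub_apply, Module.End.mul_apply, Pi.add_apply, Pi.sub_apply,
    Pi.zero_apply, postcomp_apply, precomp₁_apply, precomp₂_apply, precomp₃_apply]
  refine and_congr Iff.rfl (forall₃_congr fun x y z => ?_)
  rw [← sub_eq_zero]
  exact iff_of_eq (congrArg (· = 0) (by abel))

theorem nijenhuis_pow_general {F : Type*} [Field F]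
    {g : Type*} [AddCommGroup g] [Module F g]
    (t : g →ₗ[F] g →ₗ[F] g →ₗ[F] g)
    (N : Module.End F g) (hN : IsNijenhuis t N) :
    ∀ k : ℕ, 0 < k → IsNijenhuis t (N ^ k) := by
  intro k hk
  rw [isNijenhuis_iff_nijenhuisRelations] at hN ⊢
  rw [← postcomp_pow, ← precomp₁_pow, ← precomp₂_pow, ← precomp₃_pow]
  exact hN.pow (pairwise_commute N) hk

theorem nijenhuis_pow {F : Type*} [Field F]
    (hchar2 : (2 : F) ≠ 0) (hchar3 : (3 : F) ≠ 0)
    {g : Type*} [AddCommGroup g] [Module F g]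
    (t : g →ₗ[F] g →ₗ[F] g →ₗ[F] g)
    (hskew : ∀ x y : g, t x x y = 0)
    (hjac : ∀ x y z : g, t x y z + t y z x + t z x y = 0)
    (hfund : ∀ x y a b c : g,
      t x y (t a b c) = t (t x y a) b c + t a (t x y b) c + t a b (t x y c))
    (N : Module.End F g) (hN : IsNijenhuis t N) :
    ∀ k : ℕ, 0 < k → IsNijenhuis t (N ^ k) :=
  nijenhuis_pow_general t N hN
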